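/- arXiv:1804.04951 — 2 statements merged into one kernel-verified Lean document; each statement's English description precedes it below -/
import Mathlib

section
/- Let V be a finite-dimensional real vector space, F ⊆ V a subspace, and ω a skew-symmetric bilinear form on F. Then D_{F,ω} = {(u,α) ∈ V ⊕ V* : u ∈ F and α(v) = ω(u,v) for all v ∈ F} is a linear Dirac structure on V; moreover its projection onto V equals F and the induced form ω_{D_{F,ω}} equals ω. -/
open Module

def pairLR {V : Type*} [AddCommGroup V] [Module ℝ V]
    (x y : V × Module.Dual ℝ V) : ℝ := x.2 y.1 + y.2 x.1

def orthSet {V : Type*} [AddCommGroup V] [Module ℝ V]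
    (D : Submodule ℝ (V × Module.Dual ℝ V)) : Set (V × Module.Dual ℝ V) :=
  {x | ∀ y ∈ D, pairLR x y = 0}

def IsDirac {V : Type*} [AddCommGroup V] [Module ℝ V]
    (D : Submodule ℝ (V × Module.Dual ℝ V)) : Prop :=
  (D : Set (V × Module.Dual ℝ V)) = orthSet D

def diracOfForm {V : Type*} [AddCommGroup V] [Module ℝ V] (F : Submodule ℝ V)
    (ω : F →ₗ[ℝ] F →ₗ[ℝ] ℝ) : Submodule ℝ (V × Module.Dual ℝ V) where
  carrier := {p | ∃ h : p.1 ∈ F, ∀ v : F, p.2 v = ω ⟨p.1, h⟩ v}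
  zero_mem' := ⟨F.zero_mem, fun v => by
    have h : (⟨(0 : V × Module.Dual ℝ V).1, F.zero_mem⟩ : F) = 0 := rfl
    rw [h, map_zero]
    simp⟩
  add_mem' := by
    rintro a b ⟨ha, Ha⟩ ⟨hb, Hb⟩
    refine ⟨F.add_mem ha hb, fun v => ?_⟩
    have h : (⟨(a + b).1, F.add_mem ha hb⟩ : F) = ⟨a.1, ha⟩ + ⟨b.1, hb⟩ := rfl
    have h2 : (a + b).2 v = a.2 v + b.2 v := rfl
    rw [h2, h, map_add, LinearMap.add_apply, Ha v, Hb v]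
  smul_mem' := by
    rintro c a ⟨ha, Ha⟩
    refine ⟨F.smul_mem c ha, fun v => ?_⟩
    have h : (⟨(c • a).1, F.smul_mem c ha⟩ : F) = c • (⟨a.1, ha⟩ : F) := rfl
    have h2 : (c • a).2 v = c • (a.2 v) := rfl
    rw [h2, h, map_smul, LinearMap.smul_apply, Ha v]

/-! Skew-symmetry of `ω` makes `D_{F,ω}` isotropic. Conversely, pairing an element `(u, α)` of
the orthogonal with `(0, β)` for functionals `β` vanishing on `F` forces `u ∈ F`, and pairing it
with `(v, β)` for `β` extending `ω v` forces `α v = ω u v`. -/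

section DiracOfForm

variable {V : Type*} [AddCommGroup V] [Module ℝ V] {F : Submodule ℝ V}
  {ω : F →ₗ[ℝ] F →ₗ[ℝ] ℝ}

theorem exists_mem_diracOfForm (u : F) : ∃ α, ((u : V), α) ∈ diracOfForm F ω := by
  obtain ⟨α, hα⟩ := LinearMap.exists_extend (ω u)
  exact ⟨α, u.2, fun v => LinearMap.congr_fun hα v⟩

theorem pairLR_eq_zero_of_mem_diracOfForm (hskew : ∀ u v : F, ω u v = - ω v u)
    {x y : V × Module.Dual ℝ V} (hx : x ∈ diracOfForm F ω) (hy : y ∈ diracOfForm F ω) :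
    pairLR x y = 0 := by
  obtain ⟨hx₁, hx₂⟩ := hx
  obtain ⟨hy₁, hy₂⟩ := hy
  rw [pairLR, hx₂ ⟨y.1, hy₁⟩, hy₂ ⟨x.1, hx₁⟩, hskew]
  ring

theorem fst_mem_of_mem_orthSet_diracOfForm {x : V × Module.Dual ℝ V}
    (hx : x ∈ orthSet (diracOfForm F ω)) : x.1 ∈ F := by
  by_contra hxF
  obtain ⟨β, hβx, hFβ⟩ := Submodule.exists_le_ker_of_notMem hxF
  have hβ : ((0 : V), β) ∈ diracOfForm F ω :=
    ⟨F.zero_mem, fun v => show β v = ω 0 v by simpa using hFβ v.2⟩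
  apply hβx
  simpa [pairLR] using hx _ hβ

theorem mem_diracOfForm_of_mem_orthSet (hskew : ∀ u v : F, ω u v = - ω v u)
    {x : V × Module.Dual ℝ V} (hx : x ∈ orthSet (diracOfForm F ω)) : x ∈ diracOfForm F ω := by
  have hx₁ := fst_mem_of_mem_orthSet_diracOfForm hx
  refine ⟨hx₁, fun v => ?_⟩
  obtain ⟨β, hβ⟩ := exists_mem_diracOfForm (ω := ω) v
  have hpair : x.2 v + β x.1 = 0 := hx _ hβ
  have hβx : β x.1 = ω v ⟨x.1, hx₁⟩ := hβ.2 ⟨x.1, hx₁⟩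
  rw [hskew]
  linarith

theorem isDirac_diracOfForm (hskew : ∀ u v : F, ω u v = - ω v u) :
    IsDirac (diracOfForm F ω) :=
  Set.Subset.antisymm (fun _ hx _ hy => pairLR_eq_zero_of_mem_diracOfForm hskew hx hy)
    (fun _ hx => mem_diracOfForm_of_mem_orthSet hskew hx)

end DiracOfForm

theorem stmt6_general {V : Type*} [AddCommGroup V] [Module ℝ V]
    (F : Submodule ℝ V) (ω : F →ₗ[ℝ] F →ₗ[ℝ] ℝ)
    (hskew : ∀ u v : F, ω u v = - ω v u) :
    IsDirac (diracOfForm F ω) ∧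
    (∀ u : V, (∃ α, (u, α) ∈ diracOfForm F ω) ↔ u ∈ F) ∧
    (∀ (u : V) (α : Module.Dual ℝ V) (h : u ∈ F), (u, α) ∈ diracOfForm F ω →
      ∀ v : F, α v = ω ⟨u, h⟩ v) :=
  ⟨isDirac_diracOfForm hskew,
    fun u => ⟨fun ⟨_, hα⟩ => hα.1, fun hu => exists_mem_diracOfForm ⟨u, hu⟩⟩,
    fun _ _ _ hα => hα.2⟩

theorem stmt6 {V : Type*} [AddCommGroup V] [Module ℝ V] [FiniteDimensional ℝ V]
    (F : Submodule ℝ V) (ω : F →ₗ[ℝ] F →ₗ[ℝ] ℝ)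
    (hskew : ∀ u v : F, ω u v = - ω v u) :
    IsDirac (diracOfForm F ω) ∧
    (∀ u : V, (∃ α, (u, α) ∈ diracOfForm F ω) ↔ u ∈ F) ∧
    (∀ (u : V) (α : Module.Dual ℝ V) (h : u ∈ F), (u, α) ∈ diracOfForm F ω →
      ∀ v : F, α v = ω ⟨u, h⟩ v) :=
  stmt6_general F ω hskew
end

section
/- A subspace Σ ⊆ V ⊕ V* is coisotropic if and only if it contains some linear Dirac structure on V. -/
open Module

/-!
If `Σ^⊥ ⊆ Σ`, take the Lagrangian `L = V ⊕ 0` and put `D = Σ^⊥ + (L ∩ Σ) ⊆ Σ`. It is isotropic: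
`Σ^⊥` is orthogonal to all of `Σ ⊇ D`, and `L ∩ Σ ⊆ L` is isotropic. Since `(L + Σ)^⊥ = L ∩ Σ^⊥`,
counting dimensions gives `dim D = dim L = ½ dim (V ⊕ V*)`, so `D = D^⊥`. Conversely, a Dirac
structure `D ⊆ Σ` gives `Σ^⊥ ⊆ D^⊥ = D ⊆ Σ`.
-/

namespace LinearMap.BilinForm

section CommRing

variable {R M : Type*} [CommRing R] [AddCommGroup M] [Module R M] {B : LinearMap.BilinForm R M}

lemma orthogonal_sup (A C : Submodule R M) :
    B.orthogonal (A ⊔ C) = B.orthogonal A ⊓ B.orthogonal C := by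
  refine le_antisymm (le_inf (B.orthogonal_le le_sup_left) (B.orthogonal_le le_sup_right)) ?_
  rintro x ⟨hA, hC⟩ y hy
  obtain ⟨a, ha, c, hc, rfl⟩ := Submodule.mem_sup.mp hy
  rw [map_add, LinearMap.add_apply, hA a ha, hC c hc, add_zero]

lemma orthogonal_sup_inf_le_orthogonal (hB : B.IsRefl) {L S : Submodule R M}
    (hL : L ≤ B.orthogonal L) (hS : B.orthogonal S ≤ S) :
    B.orthogonal S ⊔ L ⊓ S ≤ B.orthogonal (B.orthogonal S ⊔ L ⊓ S) := by
  have hSS : S ≤ B.orthogonal (B.orthogonal S) := B.le_orthogonal_orthogonal hB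
  rw [orthogonal_sup]
  exact sup_le (le_inf (hS.trans hSS) (B.orthogonal_le inf_le_right))
    (le_inf (inf_le_right.trans hSS) (inf_le_left.trans (hL.trans (B.orthogonal_le inf_le_left))))

end CommRing

variable {K W : Type*} [Field K] [AddCommGroup W] [Module K W] [FiniteDimensional K W]
  {B : LinearMap.BilinForm K W}

lemma finrank_orthogonal_add (hB : B.Nondegenerate) (U : Submodule K W) :
    finrank K (B.orthogonal U) + finrank K U = finrank K W := by
  have := U.finrank_le
  rw [finrank_orthogonal hB]
  omega

lemma finrank_orthogonal_sup_inf (hB : B.Nondegenerate) {L S : Submodule K W}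
    (hL : B.orthogonal L = L) (hS : B.orthogonal S ≤ S) :
    finrank K ↥(B.orthogonal S ⊔ L ⊓ S) = finrank K L := by
  have hLS := Submodule.finrank_sup_add_finrank_inf_eq L S
  have hD := Submodule.finrank_sup_add_finrank_inf_eq (B.orthogonal S) (L ⊓ S)
  rw [inf_left_comm, inf_eq_left.mpr hS] at hD
  have hLS_orth := finrank_orthogonal_add hB (L ⊔ S)
  rw [orthogonal_sup, hL] at hLS_orth
  have hS_orth := finrank_orthogonal_add hB S
  have hL_orth := finrank_orthogonal_add hB L
  rw [hL] at hL_orth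
  omega

lemma orthogonal_eq_self_of_le_of_finrank_eq (hB : B.Nondegenerate) {L D : Submodule K W}
    (hL : B.orthogonal L = L) (hD : D ≤ B.orthogonal D) (h : finrank K D = finrank K L) :
    B.orthogonal D = D := by
  refine (Submodule.eq_of_le_of_finrank_le hD ?_).symm
  have hD_orth := finrank_orthogonal_add hB D
  have hL_orth := finrank_orthogonal_add hB L
  rw [hL] at hL_orth
  omega

theorem exists_orthogonal_eq_self_le (hB : B.Nondegenerate) (hB' : B.IsRefl)
    {L S : Submodule K W} (hL : B.orthogonal L = L) (hS : B.orthogonal S ≤ S) :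
    ∃ D : Submodule K W, B.orthogonal D = D ∧ D ≤ S :=
  ⟨B.orthogonal S ⊔ L ⊓ S,
    orthogonal_eq_self_of_le_of_finrank_eq hB hL
      (orthogonal_sup_inf_le_orthogonal hB' hL.ge hS) (finrank_orthogonal_sup_inf hB hL hS),
    sup_le hS inf_le_right⟩

end LinearMap.BilinForm

section Pairing

variable (V : Type*) [AddCommGroup V] [Module ℝ V]

noncomputable def pairing : LinearMap.BilinForm ℝ (V × Dual ℝ V) :=
  LinearMap.BilinForm.congr (LinearEquiv.prodComm ℝ (Dual ℝ V) V) (LinearMap.dualProd ℝ V)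

variable {V}

lemma pairing_apply (x y : V × Dual ℝ V) : pairing V x y = pairLR x y := by
  simp [pairing, pairLR, add_comm]

lemma pairing_isRefl : (pairing V).IsRefl := by
  intro x y h
  rw [pairing_apply, pairLR] at h ⊢
  linarith

lemma pairing_nondegenerate : (pairing V).Nondegenerate := by
  refine (LinearMap.BilinForm.nondegenerate_congr_iff _).mpr
    ((LinearMap.isSymm_dualProd ℝ V).isRefl.nondegenerate_iff_separatingLeft.mpr ?_)
  exact (LinearMap.separatingLeft_dualProd ℝ V).mpr (Module.eval_apply_injective ℝ)

lemma orthSet_eq_orthogonal (S : Submodule ℝ (V × Dual ℝ V)) :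
    orthSet S = ((pairing V).orthogonal S : Set (V × Dual ℝ V)) := by
  ext x
  exact forall₂_congr fun y _ => by
    rw [pairing_apply, pairLR, pairLR, add_comm]

lemma isDirac_iff (D : Submodule ℝ (V × Dual ℝ V)) : IsDirac D ↔ (pairing V).orthogonal D = D := by
  rw [IsDirac, orthSet_eq_orthogonal, SetLike.coe_set_eq, eq_comm]

lemma orthogonal_prod_top_bot :
    (pairing V).orthogonal (Submodule.prod ⊤ ⊥) = Submodule.prod ⊤ ⊥ := by
  ext ⟨v, α⟩
  simp only [LinearMap.BilinForm.mem_orthogonal_iff, Submodule.mem_prod, Submodule.mem_top,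
    Submodule.mem_bot, true_and, Prod.forall, pairing_apply, pairLR]
  constructor
  · intro h
    ext w
    simpa using h w 0 rfl
  · rintro rfl w β rfl
    simp

end Pairing

theorem stmt13 {V : Type*} [AddCommGroup V] [Module ℝ V] [FiniteDimensional ℝ V]
    (S : Submodule ℝ (V × Module.Dual ℝ V)) :
    orthSet S ⊆ (S : Set (V × Module.Dual ℝ V)) ↔
      ∃ D : Submodule ℝ (V × Module.Dual ℝ V), IsDirac D ∧ D ≤ S := by
  simp only [orthSet_eq_orthogonal, SetLike.coe_subset_coe, isDirac_iff]
  refine ⟨fun hS => LinearMap.BilinForm.exists_orthogonal_eq_self_le pairing_nondegenerate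
    pairing_isRefl orthogonal_prod_top_bot hS, ?_⟩
  rintro ⟨D, hD, hDS⟩
  exact ((pairing V).orthogonal_le hDS).trans (hD.le.trans hDS)
end
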